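/- Diagonal optimality at large penalty: if ρ ≥ ρ_max where the off-diagonal entries satisfy |Σ_{ij}| ≤ ρ for all i ≠ j while Σ_{ii} > 0, then the diagonal matrix X* with X*_{ii} = 1/(Σ_{ii} + ρ) is the optimal solution of the primal problem maximize log det X − Tr(ΣX) − ρ‖X‖₁ over positive definite X, with corresponding dual solution U* = X*⁻¹ diagonal with U*_{ii} = Σ_{ii} + ρ. -/

import Mathlib

open Matrix Finset

/-! Weak duality: for positive definite `X` and `U = Bᴴ B`, applying `log λ ≤ λ - 1` to the
eigenvalues of `B X Bᴴ` gives `log det X + log det U ≤ tr (U X) - n`, and `tr ((U - Σ) X) ≤ ρ ‖X‖₁`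
when `|U - Σ| ≤ ρ` entrywise. Hence every such `U` bounds the primal objective by
`-log det U - n`. The diagonal pair `X* = U*⁻¹` attains the bound because
`Σᵢᵢ X*ᵢᵢ + ρ X*ᵢᵢ = 1` for every `i`. -/

namespace Matrix

variable {ι : Type*}

theorem abs_diagonal_diag_add_sub_le [DecidableEq ι] {S : Matrix ι ι ℝ} {ρ : ℝ} (hρ : 0 ≤ ρ)
    (hoff : ∀ i j, i ≠ j → |S i j| ≤ ρ) (i j : ι) :
    |diagonal (fun k => S k k + ρ) i j - S i j| ≤ ρ := by
  rcases eq_or_ne i j with rfl | hij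
  · simp [abs_of_nonneg hρ]
  · simpa [diagonal_apply_ne _ hij] using hoff i j hij

variable [Fintype ι]

theorem trace_mul_le_mul_sum_abs {A X : Matrix ι ι ℝ} {ρ : ℝ} (hA : ∀ i j, |A i j| ≤ ρ) :
    (A * X).trace ≤ ρ * ∑ i, ∑ j, |X i j| := by
  calc (A * X).trace = ∑ i, ∑ j, A i j * X j i := by simp [trace, mul_apply]
    _ ≤ ∑ i, ∑ j, ρ * |X j i| := by
        refine sum_le_sum fun i _ => sum_le_sum fun j _ => ?_
        calc A i j * X j i ≤ |A i j| * |X j i| := by rw [← abs_mul]; exact le_abs_self _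
          _ ≤ ρ * |X j i| := mul_le_mul_of_nonneg_right (hA i j) (abs_nonneg _)
    _ = ρ * ∑ i, ∑ j, |X i j| := by rw [sum_comm, mul_sum]; simp only [mul_sum]

variable [DecidableEq ι]

theorem PosDef.log_det_le_trace_sub_card {M : Matrix ι ι ℝ} (hM : M.PosDef) :
    Real.log M.det ≤ M.trace - Fintype.card ι := by
  have hev := hM.eigenvalues_pos
  rw [hM.isHermitian.det_eq_prod_eigenvalues, hM.isHermitian.trace_eq_sum_eigenvalues]
  simp only [RCLike.ofReal_real_eq_id, id_eq]
  rw [Real.log_prod fun i _ => (hev i).ne']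
  calc ∑ i, Real.log (hM.isHermitian.eigenvalues i)
      ≤ ∑ i, (hM.isHermitian.eigenvalues i - 1) :=
        sum_le_sum fun i _ => Real.log_le_sub_one_of_pos (hev i)
    _ = _ := by simp [sum_sub_distrib]

theorem PosDef.exists_isUnit_eq_conjTranspose_mul {U : Matrix ι ι ℝ} (hU : U.PosDef) :
    ∃ B : Matrix ι ι ℝ, IsUnit B ∧ U = Bᴴ * B := by
  -- the order and C⋆-algebra structures on matrices are scoped instances
  open scoped MatrixOrder Matrix.Norms.L2Operator in
  exact CStarAlgebra.isStrictlyPositive_iff_eq_star_mul_self.mp hU.isStrictlyPositive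

theorem PosDef.log_det_add_log_det_le_trace_mul_sub_card {X U : Matrix ι ι ℝ}
    (hX : X.PosDef) (hU : U.PosDef) :
    Real.log X.det + Real.log U.det ≤ (U * X).trace - Fintype.card ι := by
  obtain ⟨B, hB, rfl⟩ := hU.exists_isUnit_eq_conjTranspose_mul
  have hBXB : (B * X * Bᴴ).PosDef :=
    hX.mul_mul_conjTranspose_same (vecMul_injective_iff_isUnit.mpr hB)
  have hdet : (B * X * Bᴴ).det = X.det * (Bᴴ * B).det := by
    simp only [det_mul]; ring
  have htrace : (B * X * Bᴴ).trace = (Bᴴ * B * X).trace := by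
    rw [trace_mul_comm, ← Matrix.mul_assoc]
  rw [← Real.log_mul hX.det_pos.ne' hU.det_pos.ne', ← hdet, ← htrace]
  exact hBXB.log_det_le_trace_sub_card

theorem sum_sum_abs_diagonal (v : ι → ℝ) :
    ∑ i, ∑ j, |diagonal v i j| = ∑ i, |v i| := by
  simp [diagonal_apply, apply_ite]

end Matrix

section Covsel

variable {ι : Type*} [Fintype ι] [DecidableEq ι]

noncomputable def covselObjective (S : Matrix ι ι ℝ) (ρ : ℝ) (X : Matrix ι ι ℝ) : ℝ :=
  Real.log X.det - (S * X).trace - ρ * ∑ i, ∑ j, |X i j|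

theorem covselObjective_le_of_dual_feasible {S X U : Matrix ι ι ℝ} {ρ : ℝ}
    (hX : X.PosDef) (hU : U.PosDef) (hUS : ∀ i j, |U i j - S i j| ≤ ρ) :
    covselObjective S ρ X ≤ -Real.log U.det - Fintype.card ι := by
  have hgap := hX.log_det_add_log_det_le_trace_mul_sub_card hU
  have hpen : ((U - S) * X).trace ≤ ρ * ∑ i, ∑ j, |X i j| := trace_mul_le_mul_sum_abs hUS
  rw [sub_mul, trace_sub] at hpen
  unfold covselObjective
  linarith

theorem covselObjective_diagonal_inv {S : Matrix ι ι ℝ} {ρ : ℝ} (hpos : ∀ i, 0 < S i i + ρ) :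
    covselObjective S ρ (diagonal fun i => (S i i + ρ)⁻¹) =
      -Real.log (diagonal fun i => S i i + ρ).det - Fintype.card ι := by
  have hdet : Real.log (diagonal fun i => (S i i + ρ)⁻¹).det =
      -Real.log (diagonal fun i => S i i + ρ).det := by
    simp [det_diagonal, prod_inv_distrib]
  have htrace : (S * diagonal fun i => (S i i + ρ)⁻¹).trace = ∑ i, S i i * (S i i + ρ)⁻¹ := by
    simp [trace, mul_diagonal]
  have hnorm : ∑ i, ∑ j, |diagonal (fun i => (S i i + ρ)⁻¹) i j| = ∑ i, (S i i + ρ)⁻¹ := by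
    rw [sum_sum_abs_diagonal]
    exact sum_congr rfl fun i _ => abs_of_pos (inv_pos.2 (hpos i))
  have hcard : ∑ i, S i i * (S i i + ρ)⁻¹ + ρ * ∑ i, (S i i + ρ)⁻¹ = Fintype.card ι := by
    have hone : ∀ i, S i i * (S i i + ρ)⁻¹ + ρ * (S i i + ρ)⁻¹ = 1 := fun i => by
      rw [← add_mul, mul_inv_cancel₀ (hpos i).ne']
    simp [mul_sum, ← sum_add_distrib, hone]
  unfold covselObjective
  rw [hdet, htrace, hnorm]
  linarith

end Covsel

theorem covsel_diagonal_optimal_general (n : ℕ) (S : Matrix (Fin n) (Fin n) ℝ)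
    (ρ : ℝ) (hρ : 0 < ρ)
    (hdiag : ∀ i, 0 < S i i) (hoff : ∀ i j, i ≠ j → |S i j| ≤ ρ)
    (Xstar Ustar : Matrix (Fin n) (Fin n) ℝ)
    (hX : Xstar = Matrix.diagonal fun i => (S i i + ρ)⁻¹)
    (hUmat : Ustar = Matrix.diagonal fun i => S i i + ρ) :
    Xstar.PosDef ∧ Ustar = Xstar⁻¹ ∧ (∀ i j, |Ustar i j - S i j| ≤ ρ) ∧
      ∀ X : Matrix (Fin n) (Fin n) ℝ, X.IsSymm → X.PosDef →
        Real.log X.det - (S * X).trace - ρ * ∑ i, ∑ j, |X i j| ≤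
          Real.log Xstar.det - (S * Xstar).trace - ρ * ∑ i, ∑ j, |Xstar i j| := by
  have hpos : ∀ i, 0 < S i i + ρ := fun i => add_pos (hdiag i) hρ
  subst hX hUmat
  have hfeas := abs_diagonal_diag_add_sub_le hρ.le hoff
  refine ⟨PosDef.diagonal fun i => inv_pos.2 (hpos i), ?_, hfeas, fun X _ hXpd => ?_⟩
  · refine (inv_eq_left_inv ?_).symm
    rw [diagonal_mul_diagonal, ← diagonal_one]
    exact congrArg diagonal (funext fun i => mul_inv_cancel₀ (hpos i).ne')
  calc Real.log X.det - (S * X).trace - ρ * ∑ i, ∑ j, |X i j|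
      ≤ -Real.log (diagonal fun i => S i i + ρ).det - Fintype.card (Fin n) :=
        covselObjective_le_of_dual_feasible hXpd (PosDef.diagonal hpos) hfeas
    _ = _ := (covselObjective_diagonal_inv hpos).symm

/-- Diagonal optimality at large penalty: if `|Σ_{ij}| ≤ ρ` for all `i ≠ j`, the
diagonal matrix `X*` with `X*_{ii} = 1/(Σ_{ii} + ρ)` is optimal for the primal
problem, with dual solution `U* = X*⁻¹` diagonal with entries `Σ_{ii} + ρ`. -/
theorem covsel_diagonal_optimal (n : ℕ) (S : Matrix (Fin n) (Fin n) ℝ)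
    (hS : S.IsSymm) (ρ : ℝ) (hρ : 0 < ρ)
    (hdiag : ∀ i, 0 < S i i) (hoff : ∀ i j, i ≠ j → |S i j| ≤ ρ)
    (Xstar Ustar : Matrix (Fin n) (Fin n) ℝ)
    (hX : Xstar = Matrix.diagonal fun i => (S i i + ρ)⁻¹)
    (hUmat : Ustar = Matrix.diagonal fun i => S i i + ρ) :
    Xstar.PosDef ∧ Ustar = Xstar⁻¹ ∧ (∀ i j, |Ustar i j - S i j| ≤ ρ) ∧
      ∀ X : Matrix (Fin n) (Fin n) ℝ, X.IsSymm → X.PosDef →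
        Real.log X.det - (S * X).trace - ρ * ∑ i, ∑ j, |X i j| ≤
          Real.log Xstar.det - (S * Xstar).trace - ρ * ∑ i, ∑ j, |Xstar i j| :=
  covsel_diagonal_optimal_general n S ρ hρ hdiag hoff Xstar Ustar hX hUmat
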